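/- Suppose ε_i > 0 for all i and let Ω̃(ε) = {((u_i,x_i))_i : (u_i,x_i) ∈ G̃_i(ε_i) for all i, Σ_i x_i = d}. Then the modified primal value ṽ(ε) = min over Ω̃(ε) of Σ_i C_i(u_i,x_i) equals v, and the set of minimizers of Σ_i C_i over Ω̃(ε) equals the set of minimizers of Σ_i C_i over Ω. -/

import Mathlib

noncomputable section

/-- Feasible set of a single generator with capacity `xmax`. -/
def Gen (xmax : ℝ) : Set (ℝ × ℝ) :=
  {ux | (ux.1 = 0 ∨ ux.1 = 1) ∧ 0 ≤ ux.2 ∧ ux.2 ≤ ux.1 * xmax}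

/-- Cost of a generator. -/
def Cost (w : ℝ) (c : ℝ → ℝ) (ux : ℝ × ℝ) : ℝ := w * ux.1 + c ux.2

/-- Primal feasible set. -/
def Omega (n : ℕ) (xmax : Fin n → ℝ) (d : ℝ) : Set (Fin n → ℝ × ℝ) :=
  {X | (∀ i, X i ∈ Gen (xmax i)) ∧ ∑ i, (X i).2 = d}

/-- Lower bound `x^c,min` of possible output volumes of generator `i`. -/
def xcmin (n : ℕ) (xmax : Fin n → ℝ) (d : ℝ) (i : Fin n) : ℝ :=
  max (d - ∑ j ∈ Finset.univ.erase i, xmax j) 0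

/-- Upper bound `x^c,max` of possible output volumes of generator `i`. -/
def xcmax (n : ℕ) (xmax : Fin n → ℝ) (d : ℝ) (i : Fin n) : ℝ :=
  min d (xmax i)

/-- The modified feasible set `G̃_i(ε)`. -/
def Gtilde (xmax xcmin xcmax ε : ℝ) : Set (ℝ × ℝ) :=
  {((0 : ℝ), (0 : ℝ))} ∪
    {ux | ux.1 = 1 ∧ max (xcmin - ε) 0 ≤ ux.2 ∧ ux.2 ≤ min (xcmax + ε) xmax}

/-- Modified primal feasible set `Ω̃(ε)`. -/
def OmegaTilde (n : ℕ) (xmax : Fin n → ℝ) (d : ℝ) (ε : Fin n → ℝ) :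
    Set (Fin n → ℝ × ℝ) :=
  {X | (∀ i, X i ∈ Gtilde (xmax i) (xcmin n xmax d i) (xcmax n xmax d i) (ε i)) ∧
    ∑ i, (X i).2 = d}

/-!
The enlargement by `ε` is vacuous: at a point of `Ω` the other generators produce between `0`
and `∑_{j ≠ i} x_j^max`, so the output `x_i` of a committed generator already lies in
`[x_i^c,min, x_i^c,max]`. Hence `Ω̃(ε) = Ω`, and the two problems coincide.
-/

theorem snd_nonneg_of_mem_Gen {xmax : ℝ} {ux : ℝ × ℝ} (h : ux ∈ Gen xmax) : 0 ≤ ux.2 :=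
  h.2.1

theorem snd_le_of_mem_Gen {xmax : ℝ} (hxmax : 0 ≤ xmax) {ux : ℝ × ℝ} (h : ux ∈ Gen xmax) :
    ux.2 ≤ xmax := by
  obtain ⟨hu | hu, -, hle⟩ := h <;> rw [hu] at hle <;> linarith

theorem Gtilde_subset_Gen (xmax a b ε : ℝ) : Gtilde xmax a b ε ⊆ Gen xmax := by
  rintro ux (h0 | ⟨hu, hlo, hhi⟩)
  · rw [Set.mem_singleton_iff.mp h0]
    exact ⟨Or.inl rfl, le_rfl, by simp⟩
  · refine ⟨Or.inr hu, (le_max_right _ _).trans hlo, ?_⟩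
    rw [hu, one_mul]
    exact hhi.trans (min_le_right _ _)

theorem mem_Gtilde_of_mem_Gen {xmax a b ε : ℝ} (hε : 0 ≤ ε) {ux : ℝ × ℝ} (h : ux ∈ Gen xmax)
    (ha : a ≤ ux.2) (hb : ux.2 ≤ b) : ux ∈ Gtilde xmax a b ε := by
  obtain ⟨hu | hu, hx0, hle⟩ := h
  · left
    rw [hu, zero_mul] at hle
    exact Prod.ext hu (le_antisymm hle hx0)
  · right
    rw [hu, one_mul] at hle
    exact ⟨hu, max_le (by linarith) hx0, le_min (by linarith) hle⟩

section Omega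

variable {n : ℕ} {xmax : Fin n → ℝ} {d : ℝ} {X : Fin n → ℝ × ℝ}

theorem xcmin_le_of_mem_Omega (hxmax : ∀ i, 0 ≤ xmax i) (hX : X ∈ Omega n xmax d) (i : Fin n) :
    xcmin n xmax d i ≤ (X i).2 := by
  obtain ⟨hG, hsum⟩ := hX
  have hsplit : (X i).2 + ∑ j ∈ Finset.univ.erase i, (X j).2 = d := by
    rw [← hsum, Finset.add_sum_erase _ (fun j => (X j).2) (Finset.mem_univ i)]
  have hothers : ∑ j ∈ Finset.univ.erase i, (X j).2 ≤ ∑ j ∈ Finset.univ.erase i, xmax j :=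
    Finset.sum_le_sum fun j _ => snd_le_of_mem_Gen (hxmax j) (hG j)
  exact max_le (by linarith) (snd_nonneg_of_mem_Gen (hG i))

theorem le_xcmax_of_mem_Omega (hxmax : ∀ i, 0 ≤ xmax i) (hX : X ∈ Omega n xmax d) (i : Fin n) :
    (X i).2 ≤ xcmax n xmax d i := by
  obtain ⟨hG, hsum⟩ := hX
  refine le_min ?_ (snd_le_of_mem_Gen (hxmax i) (hG i))
  rw [← hsum]
  exact Finset.single_le_sum (fun j _ => snd_nonneg_of_mem_Gen (hG j)) (Finset.mem_univ i)

theorem omegaTilde_eq_omega (hxmax : ∀ i, 0 ≤ xmax i) {ε : Fin n → ℝ} (hε : ∀ i, 0 ≤ ε i) :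
    OmegaTilde n xmax d ε = Omega n xmax d := by
  ext X
  refine ⟨fun ⟨hG, hsum⟩ => ⟨fun i => Gtilde_subset_Gen _ _ _ _ (hG i), hsum⟩, fun hX => ?_⟩
  exact ⟨fun i => mem_Gtilde_of_mem_Gen (hε i) (hX.1 i) (xcmin_le_of_mem_Omega hxmax hX i)
    (le_xcmax_of_mem_Omega hxmax hX i), hX.2⟩

end Omega

theorem stmt_12_general (n : ℕ) (d : ℝ)
    (w xmax : Fin n → ℝ) (c : Fin n → ℝ → ℝ)
    (hxmax : ∀ i, 0 < xmax i)
    (ε : Fin n → ℝ) (hε : ∀ i, 0 < ε i)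
    (v : ℝ)
    (hv : IsLeast {r : ℝ | ∃ X ∈ Omega n xmax d,
        r = ∑ i, Cost (w i) (c i) (X i)} v) :
    IsLeast {r : ℝ | ∃ X ∈ OmegaTilde n xmax d ε,
        r = ∑ i, Cost (w i) (c i) (X i)} v
    ∧ {X ∈ OmegaTilde n xmax d ε | ∀ Y ∈ OmegaTilde n xmax d ε,
          ∑ i, Cost (w i) (c i) (X i) ≤ ∑ i, Cost (w i) (c i) (Y i)}
      = {X ∈ Omega n xmax d | ∀ Y ∈ Omega n xmax d,
          ∑ i, Cost (w i) (c i) (X i) ≤ ∑ i, Cost (w i) (c i) (Y i)} := by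
  rw [omegaTilde_eq_omega (fun i => (hxmax i).le) (fun i => (hε i).le)]
  exact ⟨hv, rfl⟩

/-- For `ε_i > 0` the modified primal problem over `Ω̃(ε)` has the same optimal value `v`
as the original primal problem, and the same set of minimizers. -/
theorem stmt_12 (n : ℕ) (d : ℝ) (hd : 0 < d)
    (w xmax : Fin n → ℝ) (c : Fin n → ℝ → ℝ)
    (hxmax : ∀ i, 0 < xmax i) (hw : ∀ i, 0 ≤ w i)
    (hconv : ∀ i, ConvexOn ℝ (Set.Icc 0 (xmax i)) (c i))
    (hmono : ∀ i, MonotoneOn (c i) (Set.Icc 0 (xmax i)))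
    (hcont : ∀ i, ContinuousOn (c i) (Set.Icc 0 (xmax i)))
    (hc0 : ∀ i, c i 0 = 0)
    (hfeas : d ≤ ∑ i, xmax i)
    (ε : Fin n → ℝ) (hε : ∀ i, 0 < ε i)
    (v : ℝ)
    (hv : IsLeast {r : ℝ | ∃ X ∈ Omega n xmax d,
        r = ∑ i, Cost (w i) (c i) (X i)} v) :
    IsLeast {r : ℝ | ∃ X ∈ OmegaTilde n xmax d ε,
        r = ∑ i, Cost (w i) (c i) (X i)} v
    ∧ {X ∈ OmegaTilde n xmax d ε | ∀ Y ∈ OmegaTilde n xmax d ε,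
          ∑ i, Cost (w i) (c i) (X i) ≤ ∑ i, Cost (w i) (c i) (Y i)}
      = {X ∈ Omega n xmax d | ∀ Y ∈ Omega n xmax d,
          ∑ i, Cost (w i) (c i) (X i) ≤ ∑ i, Cost (w i) (c i) (Y i)} :=
  stmt_12_general n d w xmax c hxmax ε hε v hv

end
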